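/- Let κ be a field and let V be a tame persistence vector space over κ with bar code given by a decomposition V ≅ ⊕_{k∈K} I[a_k, b_k]. Define μ(i,j) = #{k ∈ K : (a_k, b_k) = (i,j)} for i ∈ ℕ, j ∈ ℕ ∪ {∞}, and β(i,j) = dim(range φ_{i,j}) for i ≤ j in ℕ, with β(i,∞) defined as β(i,m) for any m ≥ i beyond which all structure maps are isomorphisms. Then: (1) μ(i,j) = β(i,j) − β(i−1,j) − β(i,j+1) + β(i−1,j+1) for 0 < i ≤ j < ∞; μ(0,j) = β(0,j) − β(0,j+1) for 0 ≤ j < ∞; μ(i,∞) = β(i,∞) − β(i−1,∞) for 0 < i < ∞; μ(0,∞) = β(0,∞); and (2) β(i,j) = Σ_{l ≤ i, m ≥ j} μ(l,m) for all i ≤ j. -/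

import Mathlib

/-!
An isomorphism of persistence vector spaces preserves the ranks of all the maps `φ_{i,j}`, and
ranks add up over a direct sum. In an interval module `I[a,b]` the map `φ_{i,j}` is the
identity of `κ` when `a ≤ i ≤ j ≤ b` and zero otherwise, so `β(i,j)` counts the bars with
`a_k ≤ i` and `j ≤ b_k`. Sorting these bars by birth time `l ≤ i`, and the bars born at `l` by
death time, turns both formulas into bookkeeping of finite counts.
-/

open scoped Classical

/-- A persistence vector space over a field `κ`: a family of `κ`-vector spaces `V n`
(`n ∈ ℕ`) together with linear structure maps `φ n : V n → V (n+1)`. -/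
structure PersistenceVS (κ : Type) [Field κ] : Type 1 where
  V : ℕ → Type
  instAdd : ∀ n, AddCommGroup (V n)
  instMod : ∀ n, Module κ (V n)
  φ : ∀ n, V n →ₗ[κ] V (n + 1)

attribute [instance] PersistenceVS.instAdd PersistenceVS.instMod

/-- A morphism of persistence vector spaces: a family of linear maps commuting with
the structure maps. -/
structure PersistenceHom {κ : Type} [Field κ] (U W : PersistenceVS κ) where
  ω : ∀ n, U.V n →ₗ[κ] W.V n
  comm : ∀ n, (W.φ n).comp (ω n) = (ω (n + 1)).comp (U.φ n)

/-- Two persistence vector spaces are isomorphic iff there is a morphism all of whose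
components are bijective. -/
def PersistenceVS.Isomorphic {κ : Type} [Field κ] (U W : PersistenceVS κ) : Prop :=
  ∃ f : PersistenceHom U W, ∀ n, Function.Bijective (f.ω n)

/-- A persistence vector space is tame iff each component is finite dimensional and
the structure maps are isomorphisms for all sufficiently large `n`. -/
def PersistenceVS.Tame {κ : Type} [Field κ] (V : PersistenceVS κ) : Prop :=
  (∀ n, FiniteDimensional κ (V.V n)) ∧ ∃ N, ∀ n, N ≤ n → Function.Bijective (V.φ n)

/-- The `n`-th component of the interval persistence module `I[a,b]`, realized as the
submodule `⊤` of `κ` when `a ≤ n ≤ b` and `⊥` otherwise. -/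
noncomputable def intervalSub (κ : Type) [Field κ] (a : ℕ) (b : ℕ∞) (n : ℕ) :
    Submodule κ κ :=
  if a ≤ n ∧ (n : ℕ∞) ≤ b then ⊤ else ⊥

/-- The interval persistence module `I[a,b]`: component `κ` for `a ≤ n ≤ b` and `0`
otherwise, with structure maps the identity when `a ≤ n < b` and zero otherwise. -/
noncomputable def intervalModule (κ : Type) [Field κ] (a : ℕ) (b : ℕ∞) :
    PersistenceVS κ where
  V n := ↥(intervalSub κ a b n)
  instAdd _ := inferInstance
  instMod _ := inferInstance
  φ n :=
    if h : intervalSub κ a b n ≤ intervalSub κ a b (n + 1) then Submodule.inclusion h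
    else 0

/-- Direct sum (over a finite index type) of persistence vector spaces. -/
def directSumPVS {κ : Type} [Field κ] {ι : Type} [Fintype ι]
    (Vs : ι → PersistenceVS κ) : PersistenceVS κ where
  V n := ∀ k, (Vs k).V n
  instAdd _ := inferInstance
  instMod _ := inferInstance
  φ n := LinearMap.pi fun k => ((Vs k).φ n).comp (LinearMap.proj k)

/-- The composite structure map `φ_{i,j} : V i → V j` for `i ≤ j` (identity if `i = j`). -/
noncomputable def PersistenceVS.phiLE {κ : Type} [Field κ] (V : PersistenceVS κ)
    {i j : ℕ} (h : i ≤ j) : V.V i →ₗ[κ] V.V j :=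
  Nat.leRecOn h (fun {k} g => (V.φ k).comp g) LinearMap.id

open Module Finset

namespace PersistenceVS

variable {κ : Type} [Field κ]

theorem phiLE_refl (V : PersistenceVS κ) (i : ℕ) : V.phiLE (le_refl i) = LinearMap.id :=
  Nat.leRecOn_self _

theorem phiLE_succ (V : PersistenceVS κ) {i j : ℕ} (h : i ≤ j) (h' : i ≤ j + 1) :
    V.phiLE h' = V.φ j ∘ₗ V.phiLE h :=
  Nat.leRecOn_succ h _

theorem phiLE_surjective (V : PersistenceVS κ) {i j : ℕ} (h : i ≤ j)
    (hφ : ∀ n, i ≤ n → n < j → Function.Surjective (V.φ n)) :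
    Function.Surjective (V.phiLE h) := by
  induction j, h using Nat.le_induction with
  | base => rw [phiLE_refl]; exact Function.surjective_id
  | succ j h ih =>
    rw [phiLE_succ V h]
    exact (hφ j h j.lt_succ_self).comp (ih fun n hin hnj => hφ n hin (hnj.trans j.lt_succ_self))

end PersistenceVS

theorem PersistenceHom.phiLE_comp {κ : Type} [Field κ] {U W : PersistenceVS κ}
    (f : PersistenceHom U W) {i j : ℕ} (h : i ≤ j) :
    W.phiLE h ∘ₗ f.ω i = f.ω j ∘ₗ U.phiLE h := by
  induction j, h using Nat.le_induction with
  | base => rw [U.phiLE_refl, W.phiLE_refl]; rfl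
  | succ j h ih =>
    rw [U.phiLE_succ h, W.phiLE_succ h, LinearMap.comp_assoc, ih, ← LinearMap.comp_assoc,
      f.comm j, LinearMap.comp_assoc]

theorem PersistenceVS.Isomorphic.finrank_range_phiLE_eq {κ : Type} [Field κ]
    {U W : PersistenceVS κ} (hUW : U.Isomorphic W) {i j : ℕ} (h : i ≤ j) :
    finrank κ (LinearMap.range (U.phiLE h)) = finrank κ (LinearMap.range (W.phiLE h)) := by
  obtain ⟨f, hf⟩ := hUW
  rw [← LinearMap.range_comp_of_range_eq_top _ (LinearMap.range_eq_top.2 (hf i).2),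
    f.phiLE_comp h, LinearMap.range_comp]
  exact (Submodule.equivMapOfInjective _ (hf j).1 (LinearMap.range (U.phiLE h))).finrank_eq

theorem LinearMap.finrank_range_piMap {κ ι : Type} [Field κ] [Fintype ι] {A B : ι → Type}
    [∀ k, AddCommGroup (A k)] [∀ k, Module κ (A k)]
    [∀ k, AddCommGroup (B k)] [∀ k, Module κ (B k)] [∀ k, FiniteDimensional κ (B k)]
    (f : ∀ k, A k →ₗ[κ] B k) :
    finrank κ (LinearMap.range (LinearMap.piMap f)) = ∑ k, finrank κ (LinearMap.range (f k)) := by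
  have hfactor : LinearMap.piMap f =
      LinearMap.piMap (fun k => (LinearMap.range (f k)).subtype) ∘ₗ
        LinearMap.piMap (fun k => (f k).rangeRestrict) := rfl
  rw [hfactor, LinearMap.range_comp_of_range_eq_top]
  · rw [LinearMap.finrank_range_of_inj, finrank_pi_fintype]
    exact Function.Injective.piMap fun k => Subtype.val_injective
  · exact LinearMap.range_eq_top.2
      (Function.Surjective.piMap fun k => (f k).surjective_rangeRestrict)

theorem directSumPVS_phiLE {κ ι : Type} [Field κ] [Fintype ι] (Vs : ι → PersistenceVS κ)
    {i j : ℕ} (h : i ≤ j) :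
    (directSumPVS Vs).phiLE h = LinearMap.piMap fun k => (Vs k).phiLE h := by
  induction j, h using Nat.le_induction with
  | base =>
    rw [PersistenceVS.phiLE_refl]
    simp_rw [PersistenceVS.phiLE_refl]
    rfl
  | succ j h ih =>
    rw [PersistenceVS.phiLE_succ _ h, ih]
    simp_rw [PersistenceVS.phiLE_succ _ h]
    rfl

section IntervalModule

variable {κ : Type} [Field κ] (a : ℕ) (b : ℕ∞)

theorem intervalSub_eq_top {n : ℕ} (ha : a ≤ n) (hb : (n : ℕ∞) ≤ b) :
    intervalSub κ a b n = ⊤ :=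
  if_pos ⟨ha, hb⟩

instance (n : ℕ) : FiniteDimensional κ ((intervalModule κ a b).V n) :=
  inferInstanceAs (FiniteDimensional κ (intervalSub κ a b n))

theorem finrank_intervalModule (n : ℕ) :
    finrank κ ((intervalModule κ a b).V n) = if a ≤ n ∧ (n : ℕ∞) ≤ b then 1 else 0 := by
  change finrank κ (intervalSub κ a b n) = _
  by_cases hn : a ≤ n ∧ (n : ℕ∞) ≤ b
  · rw [intervalSub_eq_top a b hn.1 hn.2, if_pos hn, finrank_top, finrank_self]
  · rw [intervalSub, if_neg hn, if_neg hn, finrank_bot]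

theorem intervalModule_φ_surjective {n : ℕ} (ha : a ≤ n) (hb : ((n + 1 : ℕ) : ℕ∞) ≤ b) :
    Function.Surjective ((intervalModule κ a b).φ n) := by
  have hn : intervalSub κ a b n = ⊤ := intervalSub_eq_top a b ha (le_trans (by simp) hb)
  have hle : intervalSub κ a b n ≤ intervalSub κ a b (n + 1) := by
    rw [intervalSub_eq_top a b (ha.trans n.le_succ) hb]; exact le_top
  have hφ : (intervalModule κ a b).φ n = Submodule.inclusion hle := dif_pos hle
  rw [hφ]
  rintro ⟨y, -⟩
  exact ⟨⟨y, hn ▸ Submodule.mem_top⟩, rfl⟩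

theorem finrank_range_intervalModule_phiLE {i j : ℕ} (h : i ≤ j) :
    finrank κ (LinearMap.range ((intervalModule κ a b).phiLE h)) =
      if a ≤ i ∧ (j : ℕ∞) ≤ b then 1 else 0 := by
  by_cases hab : a ≤ i ∧ (j : ℕ∞) ≤ b
  · have hsurj : Function.Surjective ((intervalModule κ a b).phiLE h) :=
      PersistenceVS.phiLE_surjective _ h fun n hin hnj =>
        intervalModule_φ_surjective a b (hab.1.trans hin) (le_trans (by exact_mod_cast hnj) hab.2)
    rw [LinearMap.range_eq_top.2 hsurj, finrank_top, finrank_intervalModule, if_pos hab,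
      if_pos ⟨hab.1.trans h, hab.2⟩]
  · rw [if_neg hab, ← Nat.le_zero]
    by_cases ha : a ≤ i
    · calc _ ≤ finrank κ ((intervalModule κ a b).V j) := Submodule.finrank_le _
        _ = 0 := by rw [finrank_intervalModule, if_neg fun h' => hab ⟨ha, h'.2⟩]
    · calc _ ≤ finrank κ ((intervalModule κ a b).V i) := LinearMap.finrank_range_le _
        _ = 0 := by rw [finrank_intervalModule, if_neg fun h' => ha h'.1]

end IntervalModule

theorem finrank_range_phiLE_eq_card {κ K : Type} [Field κ] [Fintype K]
    {a : K → ℕ} {b : K → ℕ∞} {V : PersistenceVS κ}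
    (hV : V.Isomorphic (directSumPVS fun k : K => intervalModule κ (a k) (b k)))
    {i j : ℕ} (h : i ≤ j) :
    finrank κ (LinearMap.range (V.phiLE h)) = #{k | a k ≤ i ∧ (j : ℕ∞) ≤ b k} := by
  rw [hV.finrank_range_phiLE_eq, directSumPVS_phiLE]
  refine (LinearMap.finrank_range_piMap _).trans ?_
  simp_rw [finrank_range_intervalModule_phiLE, card_filter]

section BarCounting

variable {K : Type} [Fintype K]

theorem card_filter_le_and_eq_sum (a : K → ℕ) (p : K → Prop) [DecidablePred p] (i : ℕ) :
    #{k | a k ≤ i ∧ p k} = ∑ l ∈ range (i + 1), #{k | a k = l ∧ p k} := by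
  rw [card_eq_sum_card_fiberwise (f := a) (t := range (i + 1))
    fun k hk => mem_range_succ_iff.2 (mem_filter.1 hk).2.1]
  refine sum_congr rfl fun l hl => congrArg card ?_
  ext k
  simp only [mem_filter, mem_univ, true_and]
  constructor
  · rintro ⟨⟨-, hp⟩, rfl⟩; exact ⟨rfl, hp⟩
  · rintro ⟨rfl, hp⟩; exact ⟨⟨mem_range_succ_iff.1 hl, hp⟩, rfl⟩

theorem card_filter_and_natCast_le (b : K → ℕ∞) (p : K → Prop) [DecidablePred p] (j : ℕ) :
    #{k | p k ∧ (j : ℕ∞) ≤ b k} =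
      #{k | p k ∧ ((j + 1 : ℕ) : ℕ∞) ≤ b k} + #{k | p k ∧ b k = j} := by
  rw [← card_union_of_disjoint, ← filter_or]
  · congr! 2 with k
    rw [← and_or_left, Nat.cast_succ, ENat.add_one_le_iff (ENat.natCast_ne_top j), eq_comm,
      ← le_iff_lt_or_eq]
  · refine disjoint_filter.2 fun k _ h1 h2 => ?_
    have : ((j + 1 : ℕ) : ℕ∞) ≤ j := h2.2 ▸ h1.2
    exact absurd (Nat.cast_le.1 this) (by omega)

theorem card_filter_and_le_eq_sum (b : K → ℕ∞) (M : ℕ) (hM : ∀ k, b k = ⊤ ∨ b k ≤ (M : ℕ∞))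
    (p : K → Prop) [DecidablePred p] (j : ℕ∞) :
    #{k | p k ∧ j ≤ b k} =
      (∑ m ∈ range (M + 1), if j ≤ (m : ℕ∞) then #{k | p k ∧ b k = m} else 0) +
        #{k | p k ∧ b k = ⊤} := by
  have hsplit : #{k | p k ∧ j ≤ b k} = #{k | p k ∧ j ≤ b k ∧ b k ≠ ⊤} + #{k | p k ∧ b k = ⊤} := by
    rw [← card_union_of_disjoint (disjoint_filter.2 fun k _ h1 h2 => h1.2.2 h2.2), ← filter_or]
    congr! 2 with k
    by_cases hk : b k = ⊤ <;> simp [hk]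
  have hfinite (k : K) (hk : k ∈ ({k | p k ∧ j ≤ b k ∧ b k ≠ ⊤} : Finset K)) :
      b k ∈ (range (M + 1)).map Nat.castEmbedding := by
    obtain ⟨n, hn⟩ := ENat.ne_top_iff_exists.1 (mem_filter.1 hk).2.2.2
    have hnM : n ≤ M := by exact_mod_cast hn ▸ (hM k).resolve_left (mem_filter.1 hk).2.2.2
    exact mem_map.2 ⟨n, mem_range_succ_iff.2 hnM, hn⟩
  rw [hsplit, card_eq_sum_card_fiberwise hfinite, sum_map]
  congr 1
  refine sum_congr rfl fun m _ => ?_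
  split_ifs with hjm
  · congr! 1
    ext k
    simp only [mem_filter, mem_univ, true_and, Nat.castEmbedding_apply]
    constructor
    · rintro ⟨⟨hp, -⟩, hk⟩; exact ⟨hp, hk⟩
    · rintro ⟨hp, hk⟩; exact ⟨⟨hp, hk ▸ hjm, hk ▸ ENat.natCast_ne_top m⟩, hk⟩
  · refine card_eq_zero.2 (filter_eq_empty_iff.2 fun k hks hk => hjm ?_)
    rw [Nat.castEmbedding_apply] at hk
    exact hk ▸ (mem_filter.1 hks).2.2.1

theorem card_filter_and_natCast_le_eq_top (b : K → ℕ∞) (M : ℕ)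
    (hM : ∀ k, b k = ⊤ ∨ b k ≤ (M : ℕ∞)) (p : K → Prop) [DecidablePred p] {m : ℕ} (hm : M < m) :
    #{k | p k ∧ (m : ℕ∞) ≤ b k} = #{k | p k ∧ ⊤ ≤ b k} := by
  congr! 3 with k
  rcases hM k with hk | hk
  · simp [hk]
  · refine iff_of_false (fun h => absurd (Nat.cast_le.1 (h.trans hk)) (by omega)) fun h => ?_
    rw [top_le_iff.1 h] at hk
    exact ENat.natCast_ne_top M (top_le_iff.1 hk)

end BarCounting

theorem stmt14_general {κ K : Type} [Field κ] [Fintype K]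
    (a : K → ℕ) (b : K → ℕ∞)
    (V : PersistenceVS κ)
    (hV : V.Isomorphic (directSumPVS fun k : K => intervalModule κ (a k) (b k)))
    (N : ℕ)
    (μ : ℕ → ℕ∞ → ℕ)
    (hμ : ∀ (i : ℕ) (j : ℕ∞), μ i j = Nat.card {k : K // a k = i ∧ b k = j})
    (β : ℕ → ℕ∞ → ℕ)
    (hβ : ∀ (i j : ℕ) (h : i ≤ j),
      β i (j : ℕ∞) = Module.finrank κ (LinearMap.range (V.phiLE h)))
    (hβtop : ∀ (i m : ℕ) (h : i ≤ m), N ≤ m →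
      β i ⊤ = Module.finrank κ (LinearMap.range (V.phiLE h)))
    (M : ℕ) (hM : ∀ k, b k = ⊤ ∨ b k ≤ (M : ℕ∞)) :
    ((∀ i j : ℕ, 0 < i → i ≤ j →
        (μ i (j : ℕ∞) : ℤ) =
          (β i (j : ℕ∞) : ℤ) - β (i - 1) (j : ℕ∞) - β i ((j + 1 : ℕ) : ℕ∞) +
            β (i - 1) ((j + 1 : ℕ) : ℕ∞)) ∧
      (∀ j : ℕ,
        (μ 0 (j : ℕ∞) : ℤ) = (β 0 (j : ℕ∞) : ℤ) - β 0 ((j + 1 : ℕ) : ℕ∞)) ∧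
      (∀ i : ℕ, 0 < i → (μ i ⊤ : ℤ) = (β i ⊤ : ℤ) - β (i - 1) ⊤) ∧
      μ 0 ⊤ = β 0 ⊤) ∧
    ∀ (i : ℕ) (j : ℕ∞), (i : ℕ∞) ≤ j →
      β i j =
        (∑ l ∈ Finset.range (i + 1), ∑ m ∈ Finset.range (M + 1),
            if j ≤ (m : ℕ∞) then μ l (m : ℕ∞) else 0) +
          ∑ l ∈ Finset.range (i + 1), μ l ⊤ := by
  have hμ' (i : ℕ) (j : ℕ∞) : μ i j = #{k | a k = i ∧ b k = j} := by
    rw [hμ, Nat.card_eq_fintype_card, Fintype.card_subtype]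
  have hβ' (i : ℕ) (j : ℕ∞) (hij : (i : ℕ∞) ≤ j) :
      β i j = ∑ l ∈ range (i + 1), #{k | a k = l ∧ j ≤ b k} := by
    rw [← card_filter_le_and_eq_sum a (fun k => j ≤ b k)]
    cases j with
    | top =>
      -- past `N` the rank is stable, and past `M` only the infinite bars are alive
      let m := max (max i N) (M + 1)
      rw [hβtop i m (by omega) (by omega), finrank_range_phiLE_eq_card hV,
        card_filter_and_natCast_le_eq_top b M hM _ (by omega)]
    | coe j => rw [hβ i j (Nat.cast_le.1 hij), finrank_range_phiLE_eq_card hV]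
  refine ⟨⟨fun i j hi hij => ?_, fun j => ?_, fun i hi => ?_, ?_⟩, fun i j hij => ?_⟩
  · obtain ⟨i, rfl⟩ : ∃ i', i = i' + 1 := ⟨i - 1, by omega⟩
    rw [Nat.add_sub_cancel, hβ' _ j (Nat.cast_le.2 hij), hβ' i j (Nat.cast_le.2 (by omega)),
      hβ' _ (j + 1 : ℕ) (Nat.cast_le.2 (by omega)), hβ' i (j + 1 : ℕ) (Nat.cast_le.2 (by omega)),
      sum_range_succ _ (i + 1), sum_range_succ _ (i + 1), card_filter_and_natCast_le, hμ']
    push_cast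
    ring
  · rw [hβ' 0 j (Nat.cast_le.2 j.zero_le), hβ' 0 (j + 1 : ℕ) (Nat.cast_le.2 (j + 1).zero_le), sum_range_one, sum_range_one,
      card_filter_and_natCast_le, hμ']
    push_cast
    ring
  · obtain ⟨i, rfl⟩ : ∃ i', i = i' + 1 := ⟨i - 1, by omega⟩
    rw [Nat.add_sub_cancel, hβ' _ ⊤ le_top, hβ' i ⊤ le_top, sum_range_succ _ (i + 1), hμ']
    simp only [top_le_iff]
    push_cast
    ring
  · rw [hβ' 0 ⊤ le_top, sum_range_one, hμ']
    simp only [top_le_iff]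
  · rw [hβ' i j hij, ← sum_add_distrib]
    refine sum_congr rfl fun l _ => ?_
    rw [card_filter_and_le_eq_sum b M hM]
    simp only [hμ']

/-- Relations between the multiplicities `μ(i,j)` of the bar code of a
tame persistence vector space and the persistent Betti numbers `β(i,j)`:
(1) the inclusion–exclusion formulas expressing `μ` in terms of `β` (in the four cases
`0 < i ≤ j < ∞`; `i = 0 ≤ j < ∞`; `0 < i, j = ∞`; `i = 0, j = ∞`), and
(2) `β(i,j) = Σ_{l ≤ i, m ≥ j} μ(l,m)` for all `i ≤ j` (the sum over finite `m`
being truncated at a bound `M` beyond all finite right endpoints). -/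
theorem stmt14 {κ K : Type} [Field κ] [Fintype K]
    (a : K → ℕ) (b : K → ℕ∞) (hab : ∀ k, (a k : ℕ∞) ≤ b k)
    (V : PersistenceVS κ)
    (hV : V.Isomorphic (directSumPVS fun k : K => intervalModule κ (a k) (b k)))
    (N : ℕ) (hN : ∀ n, N ≤ n → Function.Bijective (V.φ n))
    (μ : ℕ → ℕ∞ → ℕ)
    (hμ : ∀ (i : ℕ) (j : ℕ∞), μ i j = Nat.card {k : K // a k = i ∧ b k = j})
    (β : ℕ → ℕ∞ → ℕ)
    (hβ : ∀ (i j : ℕ) (h : i ≤ j),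
      β i (j : ℕ∞) = Module.finrank κ (LinearMap.range (V.phiLE h)))
    (hβtop : ∀ (i m : ℕ) (h : i ≤ m), N ≤ m →
      β i ⊤ = Module.finrank κ (LinearMap.range (V.phiLE h)))
    (M : ℕ) (hM : ∀ k, b k = ⊤ ∨ b k ≤ (M : ℕ∞)) :
    ((∀ i j : ℕ, 0 < i → i ≤ j →
        (μ i (j : ℕ∞) : ℤ) =
          (β i (j : ℕ∞) : ℤ) - β (i - 1) (j : ℕ∞) - β i ((j + 1 : ℕ) : ℕ∞) +
            β (i - 1) ((j + 1 : ℕ) : ℕ∞)) ∧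
      (∀ j : ℕ,
        (μ 0 (j : ℕ∞) : ℤ) = (β 0 (j : ℕ∞) : ℤ) - β 0 ((j + 1 : ℕ) : ℕ∞)) ∧
      (∀ i : ℕ, 0 < i → (μ i ⊤ : ℤ) = (β i ⊤ : ℤ) - β (i - 1) ⊤) ∧
      μ 0 ⊤ = β 0 ⊤) ∧
    ∀ (i : ℕ) (j : ℕ∞), (i : ℕ∞) ≤ j →
      β i j =
        (∑ l ∈ Finset.range (i + 1), ∑ m ∈ Finset.range (M + 1),
            if j ≤ (m : ℕ∞) then μ l (m : ℕ∞) else 0) +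
          ∑ l ∈ Finset.range (i + 1), μ l ⊤ :=
  stmt14_general a b V hV N μ hμ β hβ hβtop M hM
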